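/- In a uniformly random ranked tree (all rank functions on n leaves from the uniform distribution on ranked trees), the probability that the root bifurcation splits the n leaves into daughter trees of sizes r and n-r is 1/(n-1) for each r in {1,...,n-1} (with left/right daughters distinguished, i.e., for oriented trees). -/

import Mathlib

/-- A rooted binary tree with ordered (left/right) children. -/
inductive OTree : Type
  | leaf : OTree
  | node : OTree → OTree → OTree
deriving DecidableEq

/-- Number of leaves. -/
def OTree.nLeaves : OTree → ℕ
  | .leaf => 1
  | .node l r => l.nLeaves + r.nLeaves

/-- Number of internal nodes. -/
def OTree.nInt : OTree → ℕ
  | .leaf => 0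
  | .node l r => l.nInt + r.nInt + 1

/-- `t.isInt p` : the path `p` (`true` = left) leads to an internal node of `t`. -/
def OTree.isInt : OTree → List Bool → Prop
  | .leaf, _ => False
  | .node _ _, [] => True
  | .node l _, true :: p => l.isInt p
  | .node _ r, false :: p => r.isInt p

/-- `t.isLf p` : the path `p` leads to a leaf of `t`. -/
def OTree.isLf : OTree → List Bool → Prop
  | .leaf, [] => True
  | .leaf, _ :: _ => False
  | .node _ _, [] => False
  | .node l _, true :: p => l.isLf p
  | .node _ r, false :: p => r.isLf p

/-- A ranking of the internal nodes of `t`: a bijection to `{1,…,n-1}` (here `Fin t.nInt`)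
which strictly increases along every root-to-leaf path. -/
structure Ranking (t : OTree) where
  rk : {p : List Bool // t.isInt p} → Fin t.nInt
  bij : Function.Bijective rk
  mono : ∀ p q : {p : List Bool // t.isInt p}, p.1 <+: q.1 → p.1 ≠ q.1 → rk p < rk q

/-- A ranked oriented tree. -/
def RankedOTree := Σ t : OTree, Ranking t

/-!
The root of a ranked tree carries the smallest rank, so a ranking of `node l r` amounts to
rankings of `l` and `r` together with the set of ranks, among the remaining ones, given to `l`.
Hence the ranked trees with `n` leaves whose root split is `(r, n - r)` correspond to pairs of
ranked trees with `r` and `n - r` leaves together with an `(r - 1)`-subset of an `(n - 2)`-set.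
By induction there are `(n - 1)!` ranked trees with `n` leaves, so every root split occurs for
`C(n - 2, r - 1) (r - 1)! (n - r - 1)! = (n - 2)!` of them.
-/

open Function

section Interleave

variable {a b : ℕ}

theorem Finset.card_compl_of_card_eq {S : Finset (Fin (a + b))} (hS : S.card = a) :
    Sᶜ.card = b := by
  simp [Finset.card_compl, hS]

def Finset.interleave (S : Finset (Fin (a + b))) (hS : S.card = a) :
    Fin a ⊕ Fin b ≃ Fin (a + b) :=
  (Equiv.sumCongr (S.orderIsoOfFin hS).toEquiv
    ((Sᶜ.orderIsoOfFin (Finset.card_compl_of_card_eq hS)).toEquiv.trans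
      (Equiv.subtypeEquivRight fun _ => Finset.mem_compl))).trans (Equiv.sumCompl (· ∈ S))

variable (S : Finset (Fin (a + b))) (hS : S.card = a)

@[simp]
theorem Finset.interleave_inl (i : Fin a) :
    S.interleave hS (.inl i) = S.orderEmbOfFin hS i := by
  simp [Finset.interleave]

@[simp]
theorem Finset.interleave_inr (j : Fin b) :
    S.interleave hS (.inr j) = Sᶜ.orderEmbOfFin (Finset.card_compl_of_card_eq hS) j := by
  simp [Finset.interleave]

end Interleave

section RelRank

variable {γ : Type*} [Fintype γ] {m c : ℕ} {T : Finset (Fin m)} (hT : T.card = c)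
  (hγ : Fintype.card γ = c) {φ : γ → Fin m} (hφ : Injective φ) (hmem : ∀ x, φ x ∈ T)

noncomputable def relRank : γ ≃ Fin c :=
  Equiv.ofBijective (fun x => (T.orderIsoOfFin hT).symm ⟨φ x, hmem x⟩) <|
    (Fintype.bijective_iff_injective_and_card _).2
      ⟨fun x y h => hφ (by simpa using h), by simp [hγ]⟩

theorem orderEmbOfFin_relRank (x : γ) :
    T.orderEmbOfFin hT (relRank hT hγ hφ hmem x) = φ x := by
  simp [relRank, ← Finset.coe_orderIsoOfFin_apply]

theorem relRank_lt_relRank_iff {x y : γ} :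
    relRank hT hγ hφ hmem x < relRank hT hγ hφ hmem y ↔ φ x < φ y := by
  rw [← (T.orderEmbOfFin hT).lt_iff_lt, orderEmbOfFin_relRank, orderEmbOfFin_relRank]

end RelRank

section RelRanking

variable {α β : Type*}

def RelRanking (r : α → α → Prop) (k : ℕ) : Type _ :=
  {e : α ≃ Fin k // ∀ x y, r x y → e x < e y}

def Option.Rooted (r : α → α → Prop) : Option α → Option α → Prop
  | none, some _ => True
  | some x, some y => r x y
  | _, none => False

namespace RelRanking

variable {r : α → α → Prop} {s : β → β → Prop} {a b k : ℕ}

def congr (f : r ≃r s) : RelRanking r k ≃ RelRanking s k where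
  toFun e := ⟨f.toEquiv.symm.trans e.1, fun _ _ h => e.2 _ _ (f.symm.map_rel_iff.2 h)⟩
  invFun e := ⟨f.toEquiv.trans e.1, fun _ _ h => e.2 _ _ (f.map_rel_iff.2 h)⟩
  left_inv e := Subtype.ext <| Equiv.ext fun x => congrArg e.1 (f.toEquiv.symm_apply_apply x)
  right_inv e := Subtype.ext <| Equiv.ext fun x => congrArg e.1 (f.toEquiv.apply_symm_apply x)

theorem apply_none_eq_zero (e : RelRanking (Option.Rooted r) (k + 1)) : e.1 none = 0 := by
  obtain ⟨x, hx⟩ := e.1.surjective 0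
  cases x with
  | none => exact hx
  | some y => exact absurd (hx ▸ e.2 none (some y) trivial) (Fin.not_lt_zero _)

theorem succ_removeNone (e : RelRanking (Option.Rooted r) (k + 1)) (x : α) :
    ((e.1.trans (finSuccEquiv k)).removeNone x).succ = e.1 (some x) := by
  have hne : e.1 (some x) ≠ 0 := fun h =>
    Option.some_ne_none x (e.1.injective (h.trans (apply_none_eq_zero e).symm))
  obtain ⟨j, hj⟩ := Fin.exists_succ_eq.2 hne
  have := Equiv.removeNone_some (e.1.trans (finSuccEquiv k)) (x := x)
    ⟨j, by simp [← hj, finSuccEquiv_succ]⟩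
  simp only [Equiv.trans_apply, ← hj, finSuccEquiv_succ, Option.some.injEq] at this
  rw [this, hj]

def rootedEquiv : RelRanking (Option.Rooted r) (k + 1) ≃ RelRanking r k where
  toFun e := ⟨(e.1.trans (finSuccEquiv k)).removeNone, fun x y h => by
    rw [← Fin.succ_lt_succ_iff, succ_removeNone, succ_removeNone]
    exact e.2 _ _ h⟩
  invFun f := ⟨(Equiv.optionCongr f.1).trans (finSuccEquiv k).symm, by
    rintro (_ | x) (_ | y) h <;> simp only [Option.Rooted] at h
    · simp
    · simpa using f.2 x y h⟩
  left_inv e := Subtype.ext <| Equiv.ext fun x => by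
    cases x with
    | none => simp [apply_none_eq_zero]
    | some y => simp [succ_removeNone]
  right_inv f := Subtype.ext <| by simp [Equiv.trans_assoc, Equiv.removeNone_optionCongr]

def merge :
    (RelRanking r a × RelRanking s b) × {S : Finset (Fin (a + b)) // S.card = a} →
      RelRanking (Sum.LiftRel r s) (a + b)
  | ((f, g), ⟨S, hS⟩) => ⟨(Equiv.sumCongr f.1 g.1).trans (S.interleave hS), by
    rintro _ _ (h | h)
    · simpa using (S.orderEmbOfFin hS).strictMono (f.2 _ _ h)
    · simpa using (Sᶜ.orderEmbOfFin (Finset.card_compl_of_card_eq hS)).strictMono (g.2 _ _ h)⟩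

theorem image_merge_inl [Fintype α] (f : RelRanking r a) (g : RelRanking s b)
    (S : Finset (Fin (a + b))) (hS : S.card = a) :
    Finset.univ.image (fun p => (merge ((f, g), ⟨S, hS⟩)).1 (.inl p)) = S := by
  have : (fun p => (merge ((f, g), ⟨S, hS⟩)).1 (.inl p)) = S.orderEmbOfFin hS ∘ f.1 := by
    funext p; simp [merge]
  rw [this, ← Finset.image_image, Finset.image_univ_equiv, Finset.image_orderEmbOfFin_univ]

theorem merge_injective [Fintype α] :
    Injective (merge : _ → RelRanking (Sum.LiftRel r s) (a + b)) := by
  rintro ⟨⟨f, g⟩, S, hS⟩ ⟨⟨f', g'⟩, S', hS'⟩ h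
  obtain rfl : S = S' := by
    rw [← image_merge_inl f g S hS, ← image_merge_inl f' g' S' hS', h]
  have hf (p : α) : f.1 p = f'.1 p := (S.orderEmbOfFin hS).injective <| by
    simpa [merge] using congrArg (fun e => e.1 (.inl p)) h
  have hg (q : β) : g.1 q = g'.1 q :=
    (Sᶜ.orderEmbOfFin (Finset.card_compl_of_card_eq hS)).injective <| by
      simpa [merge] using congrArg (fun e => e.1 (.inr q)) h
  obtain rfl : f = f' := Subtype.ext (Equiv.ext hf)
  obtain rfl : g = g' := Subtype.ext (Equiv.ext hg)
  rfl

theorem merge_surjective [Fintype α] [Fintype β] (ha : Fintype.card α = a)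
    (hb : Fintype.card β = b) :
    Surjective (merge : _ → RelRanking (Sum.LiftRel r s) (a + b)) := by
  intro e
  have hinl : Injective fun p => e.1 (.inl p) := e.1.injective.comp Sum.inl_injective
  have hinr : Injective fun q => e.1 (.inr q) := e.1.injective.comp Sum.inr_injective
  set S := Finset.univ.image fun p => e.1 (.inl p)
  have hS : S.card = a := by rw [Finset.card_image_of_injective _ hinl, Finset.card_univ, ha]
  have hmemS (p : α) : e.1 (.inl p) ∈ S := Finset.mem_image_of_mem _ (Finset.mem_univ p)
  have hmemSc (q : β) : e.1 (.inr q) ∈ Sᶜ := by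
    simp only [S, Finset.mem_compl, Finset.mem_image, Finset.mem_univ, true_and, not_exists]
    exact fun p h => Sum.inl_ne_inr (e.1.injective h)
  let f : RelRanking r a := ⟨relRank hS ha hinl hmemS,
    fun _ _ h => (relRank_lt_relRank_iff _ _ _ _).2 (e.2 _ _ (.inl h))⟩
  let g : RelRanking s b := ⟨relRank (Finset.card_compl_of_card_eq hS) hb hinr hmemSc,
    fun _ _ h => (relRank_lt_relRank_iff _ _ _ _).2 (e.2 _ _ (.inr h))⟩
  refine ⟨((f, g), ⟨S, hS⟩), Subtype.ext <| Equiv.ext ?_⟩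
  rintro (p | q) <;> simp [merge, f, g, orderEmbOfFin_relRank]

noncomputable def sumLiftRelEquiv [Fintype α] [Fintype β] (ha : Fintype.card α = a)
    (hb : Fintype.card β = b) :
    RelRanking (Sum.LiftRel r s) (a + b) ≃
      (RelRanking r a × RelRanking s b) × {S : Finset (Fin (a + b)) // S.card = a} :=
  (Equiv.ofBijective merge ⟨merge_injective, merge_surjective ha hb⟩).symm

end RelRanking

end RelRanking

namespace OTree

theorem nInt_add_one (t : OTree) : t.nInt + 1 = t.nLeaves := by
  induction t with
  | leaf => rfl
  | node l r ihl ihr => simp only [nInt, nLeaves]; omega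

theorem nInt_eq (t : OTree) : t.nInt = t.nLeaves - 1 := by
  have := t.nInt_add_one; omega

theorem nLeaves_pos (t : OTree) : 0 < t.nLeaves := by
  have := t.nInt_add_one; omega

abbrev IntPath (t : OTree) : Type := {p : List Bool // t.isInt p}

def ProperAncestor (t : OTree) (p q : t.IntPath) : Prop := p.1 <+: q.1 ∧ p.1 ≠ q.1

def nodeIntPathEquiv (l r : OTree) : Option (l.IntPath ⊕ r.IntPath) ≃ (node l r).IntPath where
  toFun
    | none => ⟨[], trivial⟩
    | some (.inl p) => ⟨true :: p.1, p.2⟩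
    | some (.inr p) => ⟨false :: p.1, p.2⟩
  invFun
    | ⟨[], _⟩ => none
    | ⟨true :: p, h⟩ => some (.inl ⟨p, h⟩)
    | ⟨false :: p, h⟩ => some (.inr ⟨p, h⟩)
  left_inv := by rintro (_ | _ | _) <;> rfl
  right_inv := by rintro ⟨_ | ⟨_ | _, _⟩, _⟩ <;> rfl

def nodeProperAncestorIso (l r : OTree) :
    Option.Rooted (Sum.LiftRel l.ProperAncestor r.ProperAncestor) ≃r
      (node l r).ProperAncestor where
  toEquiv := nodeIntPathEquiv l r
  map_rel_iff' := by
    rintro (_ | _ | _) (_ | _ | _) <;>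
      simp [ProperAncestor, Option.Rooted, nodeIntPathEquiv]

instance instFintypeIntPath : (t : OTree) → Fintype t.IntPath
  | .leaf => ⟨∅, fun p => p.2.elim⟩
  | .node l r =>
    letI := instFintypeIntPath l
    letI := instFintypeIntPath r
    Fintype.ofEquiv _ (nodeIntPathEquiv l r)

theorem card_intPath (t : OTree) : Fintype.card t.IntPath = t.nInt := by
  induction t with
  | leaf => rfl
  | node l r ihl ihr =>
    rw [← Fintype.card_congr (nodeIntPathEquiv l r), Fintype.card_option, Fintype.card_sum,
      ihl, ihr, nInt]

end OTree

namespace Ranking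

noncomputable def equivRelRanking (t : OTree) :
    Ranking t ≃ RelRanking t.ProperAncestor t.nInt where
  toFun R := ⟨Equiv.ofBijective R.rk R.bij, fun p q h => R.mono p q h.1 h.2⟩
  invFun e := ⟨e.1, e.1.bijective, fun p q h h' => e.2 p q ⟨h, h'⟩⟩
  left_inv _ := rfl
  right_inv _ := Subtype.ext (Equiv.ext fun _ => rfl)

-- `a` and `m` are left free so that the type of shuffles is the same for all trees of given sizes.
noncomputable def nodeEquiv {l r : OTree} {a m : ℕ} (ha : l.nInt = a)
    (hm : l.nInt + r.nInt = m) :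
    Ranking (.node l r) ≃ (Ranking l × Ranking r) × {S : Finset (Fin m) // S.card = a} := by
  subst ha hm
  exact (equivRelRanking _).trans <|
    (RelRanking.congr (OTree.nodeProperAncestorIso l r).symm).trans <|
    RelRanking.rootedEquiv.trans <|
    (RelRanking.sumLiftRelEquiv (OTree.card_intPath l) (OTree.card_intPath r)).trans <|
    Equiv.prodCongr (Equiv.prodCongr (equivRelRanking l).symm (equivRelRanking r).symm)
      (Equiv.refl _)

end Ranking

def Equiv.sigmaProdEquivProdSigma {α β : Type*} (X : α → Type*) (Y : β → Type*) :
    (Σ p : α × β, X p.1 × Y p.2) ≃ (Σ a, X a) × (Σ b, Y b) where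
  toFun x := (⟨x.1.1, x.2.1⟩, ⟨x.1.2, x.2.2⟩)
  invFun y := ⟨(y.1.1, y.2.1), (y.1.2, y.2.2)⟩
  left_inv _ := rfl
  right_inv _ := rfl

namespace RankedOTree

open OTree Nat

abbrev WithLeaves (n : ℕ) : Type := {x : RankedOTree // x.1.nLeaves = n}

abbrev WithRootSplit (n r : ℕ) : Type :=
  {x : RankedOTree // x.1.nLeaves = n ∧ ∃ l rr : OTree, x.1 = .node l rr ∧ l.nLeaves = r}

variable {n r : ℕ}

noncomputable def nodeTreeEquiv (hr : r ≤ n) :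
    {l : OTree // l.nLeaves = r} × {rr : OTree // rr.nLeaves = n - r} ≃
      {t : OTree // t.nLeaves = n ∧ ∃ l rr : OTree, t = .node l rr ∧ l.nLeaves = r} :=
  Equiv.ofBijective
    (fun p =>
      ⟨.node p.1 p.2, by simp only [nLeaves, p.1.2, p.2.2]; omega, p.1, p.2, rfl, p.1.2⟩)
    ⟨fun p q h => by simpa [Prod.ext_iff, Subtype.ext_iff] using h, by
      rintro ⟨_, hn, l, rr, rfl, hl⟩
      exact ⟨(⟨l, hl⟩, ⟨rr, by simp only [nLeaves] at hn; omega⟩), rfl⟩⟩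

noncomputable def withRootSplitEquiv (hr : 1 ≤ r) (hrn : r < n) :
    WithRootSplit n r ≃
      (WithLeaves r × WithLeaves (n - r)) × {S : Finset (Fin (n - 2)) // S.card = r - 1} :=
  (Equiv.subtypeSigmaEquiv Ranking _).trans <|
  (Equiv.sigmaCongrLeft (nodeTreeEquiv hrn.le)).symm.trans <|
  (Equiv.sigmaCongrRight fun p => Ranking.nodeEquiv
    (by rw [nInt_eq, p.1.2]) (by rw [nInt_eq, nInt_eq, p.1.2, p.2.2]; omega)).trans <|
  (Equiv.sigmaProdDistrib _ _).symm.trans <|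
  Equiv.prodCongr
    ((Equiv.sigmaProdEquivProdSigma (fun l : {l : OTree // l.nLeaves = r} => Ranking l.1)
        (fun rr : {rr : OTree // rr.nLeaves = n - r} => Ranking rr.1)).trans
      (Equiv.prodCongr (Equiv.subtypeSigmaEquiv Ranking _).symm
        (Equiv.subtypeSigmaEquiv Ranking _).symm))
    (Equiv.refl _)

noncomputable def withLeavesEquivSigma (hn : 2 ≤ n) :
    WithLeaves n ≃ Σ i : Fin (n - 1), WithRootSplit n (i + 1) where
  toFun
    | ⟨⟨.leaf, _⟩, h⟩ => absurd h (by simp only [nLeaves]; omega)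
    | ⟨⟨.node l rr, R⟩, h⟩ =>
      ⟨⟨l.nLeaves - 1, by simp only [nLeaves] at h; have := rr.nLeaves_pos; omega⟩,
        ⟨⟨.node l rr, R⟩, h, l, rr, rfl, by have := l.nLeaves_pos; simp only; omega⟩⟩
  invFun y := ⟨y.2.1, y.2.2.1⟩
  left_inv := by
    rintro ⟨⟨_ | _, _⟩, h⟩
    · exact absurd h (by simp only [nLeaves]; omega)
    · rfl
  right_inv := by
    rintro ⟨i, ⟨⟨t, R⟩, _, l, rr, ht, hl⟩⟩
    obtain rfl : t = .node l rr := ht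
    exact Sigma.subtype_ext (Fin.ext (by simp only [hl]; omega)) rfl

def leafRanking : Ranking .leaf :=
  ⟨fun p => p.2.elim, ⟨fun p => p.2.elim, fun j => j.elim0⟩, fun p => p.2.elim⟩

theorem card_withLeaves_one : Nat.card (WithLeaves 1) = 1 := by
  refine Nat.card_eq_one_iff_exists.2 ⟨⟨⟨.leaf, leafRanking⟩, rfl⟩, ?_⟩
  rintro ⟨⟨_ | ⟨l, rr⟩, ⟨rk, _, _⟩⟩, h⟩
  · obtain rfl : rk = leafRanking.rk := funext fun p => p.2.elim
    rfl
  · exact absurd h (by have := l.nLeaves_pos; have := rr.nLeaves_pos; simp only [nLeaves]; omega)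

theorem card_withRootSplit (hr : 1 ≤ r) (hrn : r < n) :
    Nat.card (WithRootSplit n r) =
      Nat.card (WithLeaves r) * Nat.card (WithLeaves (n - r)) * (n - 2).choose (r - 1) := by
  rw [Nat.card_congr (withRootSplitEquiv hr hrn), Nat.card_prod, Nat.card_prod,
    Nat.card_eq_fintype_card (α := {S : Finset _ // _}), Fintype.card_finset_len, Fintype.card_fin]

theorem card_withRootSplit_of_card_withLeaves (hr : 1 ≤ r) (hrn : r < n)
    (h₁ : Nat.card (WithLeaves r) = (r - 1)!)
    (h₂ : Nat.card (WithLeaves (n - r)) = (n - r - 1)!) :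
    Nat.card (WithRootSplit n r) = (n - 2)! := by
  rw [card_withRootSplit hr hrn, h₁, h₂, show n - r - 1 = n - 2 - (r - 1) by omega, mul_comm,
    ← mul_assoc]
  exact Nat.choose_mul_factorial_mul_factorial (by omega)

theorem card_withLeaves : ∀ n, 1 ≤ n → Nat.card (WithLeaves n) = (n - 1)!
  | 1, _ => card_withLeaves_one
  | n + 2, _ => by
    have hsplit (i : Fin (n + 1)) : Nat.card (WithRootSplit (n + 2) (i + 1)) = n ! :=
      card_withRootSplit_of_card_withLeaves (by omega) (by omega)
        (card_withLeaves (i + 1) (by omega)) (card_withLeaves (n + 2 - (i + 1)) (by omega))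
    have (i : Fin (n + 1)) : Finite (WithRootSplit (n + 2) (i + 1)) :=
      Nat.finite_of_card_ne_zero (by rw [hsplit]; exact n.factorial_ne_zero)
    rw [Nat.card_congr (withLeavesEquivSigma (by omega)), Nat.card_sigma]
    simp [hsplit, Nat.factorial_succ]

theorem card_withRootSplit_eq_factorial (hr : 1 ≤ r) (hrn : r < n) :
    Nat.card (WithRootSplit n r) = (n - 2)! :=
  card_withRootSplit_of_card_withLeaves hr hrn (card_withLeaves r hr)
    (card_withLeaves (n - r) (by omega))

end RankedOTree

/-- under the uniform distribution on ranked oriented trees with n leaves, the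
probability that the root split has r leaves on the left is 1/(n-1), for each r in {1,…,n-1}. -/
theorem stmt10 (n r : ℕ) (hn : 2 ≤ n) (hr1 : 1 ≤ r) (hr2 : r ≤ n - 1) :
    (Nat.card {x : RankedOTree //
        x.1.nLeaves = n ∧ ∃ l rr : OTree, x.1 = .node l rr ∧ l.nLeaves = r} : ℚ)
      / (Nat.card {x : RankedOTree // x.1.nLeaves = n})
    = 1 / ((n : ℚ) - 1) := by
  obtain ⟨m, rfl⟩ : ∃ m, n = m + 2 := ⟨n - 2, by omega⟩
  rw [RankedOTree.card_withRootSplit_eq_factorial hr1 (by omega),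
    RankedOTree.card_withLeaves (m + 2) (by omega), Nat.add_sub_cancel,
    show m + 2 - 1 = m + 1 by omega, Nat.factorial_succ]
  push_cast
  rw [show (m : ℚ) + 2 - 1 = m + 1 by ring]
  field_simp
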